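/- arXiv:1406.6450 — 4 statements merged into one kernel-verified Lean document; each statement's English description precedes it below -/
import Mathlib

section
/- For every nonnegative integer n, the central binomial coefficient C(2n,n) equals (1/π) ∫₀⁴ sⁿ/√(4s−s²) ds. -/
/-!
The substitution `s = 4 sin² t`, `t ∈ [0, π/2]`, gives `ds / √(4s - s²) = 2 dt`, so the integral
is `2 · 4ⁿ ∫₀^{π/2} sin²ⁿ t dt = 4ⁿ ∫₀^π sin²ⁿ t dt`. Wallis' formula evaluates the latter as
`π ∏_{i<n} (2i+1)/(2i+2)`, and `4ⁿ` times that product is the central binomial coefficient.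
-/

open Real Set MeasureTheory intervalIntegral

theorem Nat.centralBinom_eq_four_pow_mul_prod (n : ℕ) :
    (n.centralBinom : ℝ) = 4 ^ n * ∏ i ∈ Finset.range n, (2 * (i : ℝ) + 1) / (2 * i + 2) := by
  induction n with
  | zero => simp
  | succ k ih =>
    have hrec : ((k + 1) * (k + 1).centralBinom : ℝ) = 2 * (2 * k + 1) * k.centralBinom := by
      exact_mod_cast Nat.succ_mul_centralBinom_succ k
    have hsucc : ((k + 1).centralBinom : ℝ) = 2 * (2 * k + 1) * k.centralBinom / (k + 1) := by
      rw [eq_div_iff (by positivity)]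
      linarith
    rw [Finset.prod_range_succ, pow_succ, hsucc, ih]
    field_simp
    ring

theorem integral_sin_pow_zero_pi_div_two (k : ℕ) :
    ∫ x in 0..π / 2, sin x ^ k = (∫ x in 0..π, sin x ^ k) / 2 := by
  have hsymm : ∫ x in π / 2..π, sin x ^ k = ∫ x in 0..π / 2, sin x ^ k := by
    simpa [sin_pi_sub, sub_half] using
      (integral_comp_sub_left (fun x => sin x ^ k) π (a := 0) (b := π / 2)).symm
  have hint (a b : ℝ) : IntervalIntegrable (fun x => sin x ^ k) volume a b :=
    (continuous_sin.pow k).intervalIntegrable a b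
  rw [← integral_add_adjacent_intervals (hint 0 (π / 2)) (hint (π / 2) π), hsymm]
  ring

theorem sin_pos_and_cos_pos_of_mem_Ioo {t : ℝ} (ht : t ∈ Ioo 0 (π / 2)) :
    0 < sin t ∧ 0 < cos t :=
  ⟨sin_pos_of_pos_of_lt_pi ht.1 (by linarith [ht.2, pi_pos]),
    cos_pos_of_mem_Ioo ⟨by linarith [ht.1, pi_pos], ht.2⟩⟩

theorem integral_zero_four_eq_integral_sin_sq (g : ℝ → ℝ) :
    ∫ s in 0..4, g s = ∫ t in 0..π / 2, 8 * sin t * cos t * g (4 * sin t ^ 2) := by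
  have hderiv (t : ℝ) : HasDerivAt (fun t => 4 * sin t ^ 2) (8 * sin t * cos t) t := by
    refine (((hasDerivAt_sin t).fun_pow 2).const_mul 4).congr_deriv ?_
    norm_num
    ring
  have h := integral_Icc_deriv_smul_of_deriv_nonneg (g := g) (a := 0) (b := π / 2)
    (by fun_prop) (fun t _ => hderiv t)
    (fun t ht => by
      obtain ⟨hsin, hcos⟩ := sin_pos_and_cos_pos_of_mem_Ioo ht
      positivity)
    (by positivity)
  norm_num at h
  rw [integral_of_le (by norm_num), integral_of_le (by positivity), ← integral_Icc_eq_integral_Ioc,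
    ← integral_Icc_eq_integral_Ioc, ← h]

theorem integral_pow_div_sqrt_four_mul_sub_sq (n : ℕ) :
    ∫ s in 0..4, s ^ n / √(4 * s - s ^ 2) = 2 * 4 ^ n * ∫ t in 0..π / 2, sin t ^ (2 * n) := by
  rw [integral_zero_four_eq_integral_sin_sq, ← intervalIntegral.integral_const_mul,
    integral_of_le (by positivity), integral_of_le (by positivity), integral_Ioc_eq_integral_Ioo,
    integral_Ioc_eq_integral_Ioo]
  refine setIntegral_congr_fun measurableSet_Ioo fun t ht => ?_
  obtain ⟨hsin, hcos⟩ := sin_pos_and_cos_pos_of_mem_Ioo ht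
  have hsqrt : √(4 * (4 * sin t ^ 2) - (4 * sin t ^ 2) ^ 2) = 4 * sin t * cos t := by
    rw [← sqrt_sq (by positivity : 0 ≤ 4 * sin t * cos t)]
    congr 1
    linear_combination (-16 * sin t ^ 2) * sin_sq_add_cos_sq t
  rw [hsqrt, mul_pow, ← pow_mul]
  field_simp
  ring

theorem central_binom_integral (n : ℕ) :
    ((2 * n).choose n : ℝ) =
      (1 / Real.pi) * ∫ s in (0:ℝ)..4, s ^ n / Real.sqrt (4 * s - s ^ 2) := by
  rw [integral_pow_div_sqrt_four_mul_sub_sq, integral_sin_pow_zero_pi_div_two,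
    integral_sin_pow_even, ← Nat.centralBinom_eq_two_mul_choose,
    Nat.centralBinom_eq_four_pow_mul_prod]
  field_simp
end

section
/- Define a₀ := √(1/11) and aₙ := √((4ⁿ + 2ⁿ + 2)/(4ⁿ + 2^{n+1} + 8)) for n ≥ 1, with moments γ_ℓ := a₀²⋯a_{ℓ−1}². Then for all ℓ ≥ 0, γ_ℓ = ∫ s^ℓ dξ_a(s), where ξ_a := (3/4)δ₀ + (2/11)δ_{1/4} + (1/22)δ_{1/2} + (1/44)δ₁. -/
open MeasureTheory
open scoped ENNReal

/-! The squared weights are the ratios of consecutive values of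
`m l = (4 ^ l + 2 ^ (l + 1) + 8) / (44 * 4 ^ l) = 2/11 * 4⁻ˡ + 1/22 * 2⁻ˡ + 1/44`, with `a₀² = m 1`,
so the product telescopes to `m l` for `l ≥ 1`; this is the `l`-th moment of `ξ_a`, whose atom at
`0` only contributes at `l = 0`. -/

section SmulDirac

variable {α E : Type*} [MeasurableSpace α] [MeasurableSingletonClass α] [NormedAddCommGroup E]

lemma integrable_smul_dirac (f : α → E) {c : ℝ≥0∞} (hc : c ≠ ∞) (x : α) :
    Integrable f (c • Measure.dirac x) :=
  (integrable_dirac enorm_lt_top).smul_measure hc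

variable [NormedSpace ℝ E] [CompleteSpace E]

lemma integral_smul_dirac (f : α → E) (c : ℝ≥0∞) (x : α) :
    ∫ a, f a ∂(c • Measure.dirac x) = c.toReal • f x := by
  rw [integral_smul_measure, integral_dirac]

lemma integral_add_smul_dirac {μ : Measure α} {f : α → E} (hf : Integrable f μ) {c : ℝ≥0∞}
    (hc : c ≠ ∞) (x : α) :
    ∫ a, f a ∂(μ + c • Measure.dirac x) = ∫ a, f a ∂μ + c.toReal • f x := by
  rw [integral_add_measure hf (integrable_smul_dirac f hc x), integral_smul_dirac]

end SmulDirac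

lemma prod_range_eq_moment_of_ratio (w : ℕ → ℝ) (hw0 : w 0 = 1 / 11)
    (hw : ∀ n : ℕ, 1 ≤ n → w n = (4 ^ n + 2 ^ n + 2) / (4 ^ n + 2 ^ (n + 1) + 8)) (l : ℕ) :
    ∏ i ∈ Finset.range l, w i
      = 3 / 4 * 0 ^ l + 2 / 11 * (1 / 4) ^ l + 1 / 22 * (1 / 2) ^ l + 1 / 44 := by
  induction l with
  | zero => norm_num
  | succ n ih =>
    rw [Finset.prod_range_succ, ih]
    rcases Nat.eq_zero_or_pos n with rfl | hn
    · rw [hw0]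
      norm_num
    · rw [hw n hn, zero_pow hn.ne', zero_pow n.succ_ne_zero]
      have h4 : (4 : ℝ) ^ n = 2 ^ n * 2 ^ n := by rw [← mul_pow]; norm_num
      rw [one_div_pow, one_div_pow, one_div_pow, one_div_pow, pow_succ 4, pow_succ 2, h4]
      field_simp
      ring

theorem moments_eq_integral_xi_a (a : ℕ → ℝ)
    (ha0 : a 0 = Real.sqrt (1 / 11))
    (ha : ∀ n : ℕ, 1 ≤ n →
      a n = Real.sqrt ((4 ^ n + 2 ^ n + 2) / (4 ^ n + 2 ^ (n + 1) + 8)))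
    (ξa : Measure ℝ)
    (hξa : ξa = (3 / 4 : ℝ≥0∞) • Measure.dirac (0 : ℝ)
      + (2 / 11 : ℝ≥0∞) • Measure.dirac (1 / 4 : ℝ)
      + (1 / 22 : ℝ≥0∞) • Measure.dirac (1 / 2 : ℝ)
      + (1 / 44 : ℝ≥0∞) • Measure.dirac (1 : ℝ))
    (l : ℕ) :
    ∏ i ∈ Finset.range l, (a i) ^ 2 = ∫ s, s ^ l ∂ξa := by
  have hsq0 : a 0 ^ 2 = 1 / 11 := by rw [ha0, Real.sq_sqrt (by norm_num)]
  have hsq : ∀ n : ℕ, 1 ≤ n → a n ^ 2 = (4 ^ n + 2 ^ n + 2) / (4 ^ n + 2 ^ (n + 1) + 8) :=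
    fun n hn => by rw [ha n hn, Real.sq_sqrt (by positivity)]
  rw [prod_range_eq_moment_of_ratio (fun i => a i ^ 2) hsq0 hsq, hξa, integral_add_smul_dirac,
    integral_add_smul_dirac, integral_add_smul_dirac, integral_smul_dirac]
  · norm_num [ENNReal.toReal_div]
  all_goals simp [integrable_add_measure, integrable_smul_dirac, ENNReal.div_eq_top]
end

section
/- Define cₙ := √((2^{n+1} + 1)/(2^{n+2} + 4)) for n ≥ 0, with moments γ_ℓ := c₀²⋯c_{ℓ−1}². Then for all ℓ ≥ 0, γ_ℓ = (1/2)(1/4)^ℓ + (1/2)(1/2)^ℓ = ∫ s^ℓ dξ_c(s), where ξ_c := (1/2)δ_{1/4} + (1/2)δ_{1/2}. -/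
/-! The moments `γ_n = (4⁻ⁿ + 2⁻ⁿ) / 2` of `ξ_c` satisfy `γ_{n+1} = γ_n c_n²`, so the product of the
`c_i²` telescopes to `γ_l`. -/

open MeasureTheory
open scoped ENNReal

theorem integral_smul_dirac_add_smul_dirac {α E : Type*} [MeasurableSpace α]
    [MeasurableSingletonClass α] [NormedAddCommGroup E] [NormedSpace ℝ E] [CompleteSpace E]
    (f : α → E) (a b : α) {p q : ℝ≥0∞} (hp : p ≠ ∞) (hq : q ≠ ∞) :
    ∫ x, f x ∂(p • Measure.dirac a + q • Measure.dirac b) = p.toReal • f a + q.toReal • f b := by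
  have hfa : Integrable f (p • Measure.dirac a) := (integrable_dirac enorm_lt_top).smul_measure hp
  have hfb : Integrable f (q • Measure.dirac b) := (integrable_dirac enorm_lt_top).smul_measure hq
  rw [integral_add_measure hfa hfb, integral_smul_measure, integral_smul_measure,
    integral_dirac, integral_dirac]

theorem moment_succ_eq_mul (n : ℕ) :
    (1 / 2 : ℝ) * (1 / 4) ^ (n + 1) + 1 / 2 * (1 / 2) ^ (n + 1)
      = (1 / 2 * (1 / 4) ^ n + 1 / 2 * (1 / 2) ^ n)
        * ((2 ^ (n + 1) + 1) / (2 ^ (n + 2) + 4)) := by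
  have h4 : (4 : ℝ) ^ n = (2 ^ n) ^ 2 := by rw [← pow_mul, mul_comm, pow_mul]; norm_num
  simp only [pow_succ, one_div, inv_pow, h4]
  field_simp
  ring

theorem moments_eq_integral_xi_c (c : ℕ → ℝ)
    (hc : ∀ n : ℕ, c n = Real.sqrt ((2 ^ (n + 1) + 1) / (2 ^ (n + 2) + 4)))
    (ξc : Measure ℝ)
    (hξc : ξc = (1 / 2 : ℝ≥0∞) • Measure.dirac (1 / 4 : ℝ)
      + (1 / 2 : ℝ≥0∞) • Measure.dirac (1 / 2 : ℝ))
    (l : ℕ) :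
    ∏ i ∈ Finset.range l, (c i) ^ 2 = (1 / 2) * (1 / 4) ^ l + (1 / 2) * (1 / 2) ^ l ∧
    ∏ i ∈ Finset.range l, (c i) ^ 2 = ∫ s, s ^ l ∂ξc := by
  have hsq (n : ℕ) : c n ^ 2 = (2 ^ (n + 1) + 1) / (2 ^ (n + 2) + 4) := by
    rw [hc n, Real.sq_sqrt (by positivity)]
  have hclosed : ∏ i ∈ Finset.range l, c i ^ 2
      = 1 / 2 * (1 / 4) ^ l + 1 / 2 * (1 / 2) ^ l :=
    Finset.prod_range_induction (fun i => c i ^ 2)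
      (fun n => 1 / 2 * (1 / 4) ^ n + 1 / 2 * (1 / 2) ^ n) (by norm_num) l
      fun k _ => by rw [hsq, moment_succ_eq_mul]
  refine ⟨hclosed, ?_⟩
  rw [hclosed, hξc, integral_smul_dirac_add_smul_dirac _ _ _ (by simp) (by simp)]
  norm_num
end

section
/- The function f(n) := (8((1/2)(1/4)ⁿ + (1/4)(1/2)ⁿ + 1/4))/(11(2(1/4)ⁿ + (1/2)ⁿ)) is monotonically increasing on the nonnegative integers. -/
/-! With `x = (1/2)^n` we have `(1/4)^n = x^2`, and the quotient simplifies to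
`2/11 * (1 + 1 / (x * (2x + 1)))`. Since `x` decreases in `n`, so does `x * (2x + 1)`,
and its reciprocal increases. -/

lemma div_eq_two_div_eleven_mul_one_add_inv {x : ℝ} (hx : 0 < x) :
    8 * ((1 / 2) * x ^ 2 + (1 / 4) * x + 1 / 4) / (11 * (2 * x ^ 2 + x)) =
      2 / 11 * (1 + (x * (2 * x + 1))⁻¹) := by
  field_simp
  ring

lemma one_fourth_pow_eq_sq_one_half_pow (n : ℕ) : (1 / 4 : ℝ) ^ n = ((1 / 2 : ℝ) ^ n) ^ 2 := by
  rw [← pow_mul, mul_comm, pow_mul]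
  norm_num

theorem f_monotone (f : ℕ → ℝ)
    (hf : ∀ n : ℕ, f n = (8 * ((1 / 2) * (1 / 4 : ℝ) ^ n + (1 / 4) * (1 / 2 : ℝ) ^ n + 1 / 4)) /
      (11 * (2 * (1 / 4 : ℝ) ^ n + (1 / 2 : ℝ) ^ n))) :
    Monotone f := by
  have hf' (n : ℕ) : f n = 2 / 11 * (1 + ((1 / 2 : ℝ) ^ n * (2 * (1 / 2 : ℝ) ^ n + 1))⁻¹) := by
    rw [hf, one_fourth_pow_eq_sq_one_half_pow, div_eq_two_div_eleven_mul_one_add_inv (by positivity)]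
  intro m n hmn
  have hpow : (1 / 2 : ℝ) ^ n ≤ (1 / 2) ^ m := pow_le_pow_of_le_one (by norm_num) (by norm_num) hmn
  rw [hf', hf']
  gcongr
end
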